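/- For positive integers n and i with 1 ≤ i ≤ n, the sum of the multinomial coefficients n!/(l1!·l2!···li!·(n−l1−···−li)!) over all tuples (l1,...,li) of positive integers with l1+···+li ≤ n equals i!·S(n+1, i+1), where S denotes the Stirling number of the second kind. -/

import Mathlib

/-!
Put `l₀ = n - ∑ lⱼ`; the summand is the multinomial coefficient of `(l₀, l₁, …, lᵢ)`. Splitting
off `l₁ = m + 1` shows that the sum `T n i` (`multinomialSum n i`) satisfies `T n 0 = 1` and
`T n (i + 1) = ∑_{m < n} C(n, m + 1) * T (n - m - 1) i`. The numbers `i! * S(n + 1, i + 1)` obey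
the same recursion, by the identity `k * S(n + 1, k + 1) = ∑_{m < n} C(n, m + 1) * S(n - m, k)`:
both sides count partitions of `{0, …, n}` into `k + 1` blocks with a marked block avoiding `n`.
-/

/-- Stirling numbers of the second kind: `stirlingSecond n k` is the number of partitions of
an `n`-element set into `k` nonempty blocks. -/
def stirlingSecond : ℕ → ℕ → ℕ
  | 0, 0 => 1
  | 0, _ + 1 => 0
  | _ + 1, 0 => 0
  | n + 1, k + 1 => (k + 1) * stirlingSecond n (k + 1) + stirlingSecond n k

open Finset
open scoped Nat

lemma stirlingSecond_one_right (n : ℕ) : stirlingSecond (n + 1) 1 = 1 := by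
  induction n with
  | zero => rfl
  | succ n ih => rw [stirlingSecond, ih]; rfl

theorem mul_stirlingSecond_succ_eq_sum_choose (n k : ℕ) :
    k * stirlingSecond (n + 1) (k + 1) =
      ∑ m ∈ range n, n.choose (m + 1) * stirlingSecond (n - m) k := by
  induction n generalizing k with
  | zero => cases k <;> simp [stirlingSecond]
  | succ n ih =>
    cases k with
    | zero =>
      rw [zero_mul, eq_comm]
      refine sum_eq_zero fun m hm => ?_
      obtain ⟨r, hr⟩ : ∃ r, n + 1 - m = r + 1 := ⟨n - m, by grind⟩
      simp [hr, stirlingSecond]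
    | succ k =>
      have pascal :
          ∑ m ∈ range (n + 1), (n + 1).choose (m + 1) * stirlingSecond (n + 1 - m) (k + 1)
            = ∑ m ∈ range (n + 1), n.choose m * stirlingSecond (n + 1 - m) (k + 1)
              + ∑ m ∈ range (n + 1), n.choose (m + 1) * stirlingSecond (n + 1 - m) (k + 1) := by
        rw [← sum_add_distrib]
        exact sum_congr rfl fun m _ => by rw [Nat.choose_succ_succ', add_mul]
      have first : ∑ m ∈ range (n + 1), n.choose m * stirlingSecond (n + 1 - m) (k + 1)
          = stirlingSecond (n + 1) (k + 1) + (k + 1) * stirlingSecond (n + 1) (k + 2) := by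
        rw [sum_range_succ', ih]
        simp [add_comm]
      have second : ∑ m ∈ range (n + 1), n.choose (m + 1) * stirlingSecond (n + 1 - m) (k + 1)
          = (k + 1) * ((k + 1) * stirlingSecond (n + 1) (k + 2))
            + k * stirlingSecond (n + 1) (k + 1) := by
        rw [sum_range_succ, Nat.choose_succ_self, zero_mul, add_zero, ih, ih, mul_sum,
          ← sum_add_distrib]
        refine sum_congr rfl fun m hm => ?_
        rw [show n + 1 - m = n - m + 1 by grind, stirlingSecond]
        ring
      rw [pascal, first, second, stirlingSecond]
      ring

def positiveTuples (i n : ℕ) : Finset (Fin i → ℕ) :=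
  (Fintype.piFinset fun _ => Icc 1 n).filter fun l => ∑ j, l j ≤ n

def multinomialSum (n i : ℕ) : ℕ :=
  ∑ l ∈ positiveTuples i n, n ! / ((∏ j, (l j)!) * (n - ∑ j, l j)!)

lemma mem_positiveTuples_succ {i n : ℕ} {l : Fin (i + 1) → ℕ} :
    l ∈ positiveTuples (i + 1) n ↔
      1 ≤ l 0 ∧ l 0 ≤ n ∧ Fin.tail l ∈ positiveTuples i (n - l 0) := by
  have le_sum (j : Fin i) : l j.succ ≤ ∑ j, Fin.tail l j :=
    single_le_sum (f := Fin.tail l) (fun _ _ => Nat.zero_le _) (mem_univ j)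
  simp only [positiveTuples, mem_filter, Fintype.mem_piFinset, mem_Icc, Fin.forall_fin_succ,
    Fin.sum_univ_succ, Fin.tail] at le_sum ⊢
  grind

lemma prod_factorial_mul_factorial_dvd {ι : Type*} (s : Finset ι) (l : ι → ℕ) {n : ℕ}
    (h : ∑ j ∈ s, l j ≤ n) : (∏ j ∈ s, (l j)!) * (n - ∑ j ∈ s, l j)! ∣ n ! :=
  (Nat.mul_dvd_mul_right (Nat.prod_factorial_dvd_factorial_sum s l) _).trans
    (Nat.factorial_mul_factorial_dvd_factorial h)

lemma factorial_div_cons_eq_choose_mul {i n a : ℕ} (l : Fin i → ℕ) (h : a + ∑ j, l j ≤ n) :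
    n ! / ((∏ j, ((Fin.cons a l : Fin (i + 1) → ℕ) j)!) *
        (n - ∑ j, (Fin.cons a l : Fin (i + 1) → ℕ) j)!)
      = n.choose a * ((n - a)! / ((∏ j, (l j)!) * (n - a - ∑ j, l j)!)) := by
  have hdvd := prod_factorial_mul_factorial_dvd univ l (n := n - a) (by omega)
  rw [Fin.prod_univ_succ, Fin.sum_univ_succ]
  simp only [Fin.cons_zero, Fin.cons_succ]
  rw [Nat.sub_add_eq, mul_assoc]
  calc n ! / (a ! * ((∏ j, (l j)!) * (n - a - ∑ j, l j)!))
      = a ! * (n.choose a * (n - a)!) / (a ! * ((∏ j, (l j)!) * (n - a - ∑ j, l j)!)) := by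
        rw [← Nat.choose_mul_factorial_mul_factorial (show a ≤ n by omega)]
        ring_nf
    _ = n.choose a * ((n - a)! / ((∏ j, (l j)!) * (n - a - ∑ j, l j)!)) := by
        rw [Nat.mul_div_mul_left _ _ a.factorial_pos, Nat.mul_div_assoc _ hdvd]

lemma multinomialSum_zero (n : ℕ) : multinomialSum n 0 = 1 := by
  simp [multinomialSum, positiveTuples, Nat.div_self n.factorial_pos]

lemma multinomialSum_succ (n i : ℕ) :
    multinomialSum n (i + 1) =
      ∑ m ∈ range n, n.choose (m + 1) * multinomialSum (n - (m + 1)) i := by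
  simp only [multinomialSum, mul_sum]
  rw [sum_sigma']
  refine (sum_nbij' (fun p => Fin.cons (p.1 + 1) p.2) (fun l => ⟨l 0 - 1, Fin.tail l⟩)
    ?_ ?_ ?_ ?_ ?_).symm
  · rintro ⟨m, l⟩ hml
    simp only [mem_sigma, mem_range] at hml
    simp only [mem_positiveTuples_succ, Fin.cons_zero, Fin.tail_cons]
    exact ⟨by omega, by omega, hml.2⟩
  · intro l hl
    simp only [mem_positiveTuples_succ] at hl
    simp only [mem_sigma, mem_range]
    exact ⟨by omega, by rw [Nat.sub_add_cancel hl.1]; exact hl.2.2⟩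
  · rintro ⟨m, l⟩ -
    simp
  · intro l hl
    simp only [mem_positiveTuples_succ] at hl
    simp only [Nat.sub_add_cancel hl.1, Fin.cons_self_tail]
  · rintro ⟨m, l⟩ hml
    simp only [mem_sigma, mem_range, positiveTuples, mem_filter] at hml
    dsimp only at hml ⊢
    exact (factorial_div_cons_eq_choose_mul l (by omega)).symm

lemma multinomialSum_eq (n i : ℕ) :
    multinomialSum n i = i ! * stirlingSecond (n + 1) (i + 1) := by
  induction i generalizing n with
  | zero => simp [multinomialSum_zero, stirlingSecond_one_right]
  | succ i ih =>
    rw [multinomialSum_succ, Nat.factorial_succ, mul_comm (i + 1), mul_assoc,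
      mul_stirlingSecond_succ_eq_sum_choose, mul_sum]
    refine sum_congr rfl fun m hm => ?_
    rw [ih, show n - (m + 1) + 1 = n - m by grind]
    ring

lemma sum_finTuples_eq_multinomialSum (n i : ℕ) :
    ∑ f ∈ univ.filter
        (fun f : Fin i → Fin (n + 1) => (∀ j, 1 ≤ (f j : ℕ)) ∧ ∑ j, (f j : ℕ) ≤ n),
      n ! / ((∏ j, ((f j : ℕ))!) * (n - ∑ j, (f j : ℕ))!) = multinomialSum n i := by
  refine sum_bij (fun f _ j => (f j : ℕ)) ?_ ?_ ?_ fun _ _ => rfl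
  · intro f hf
    simp only [mem_filter, mem_univ, true_and] at hf
    simp only [positiveTuples, mem_filter, Fintype.mem_piFinset, mem_Icc]
    exact ⟨fun j => ⟨hf.1 j, Fin.is_le (f j)⟩, hf.2⟩
  · intro f _ g _ hfg
    funext j
    exact Fin.ext (congrFun hfg j)
  · intro l hl
    simp only [positiveTuples, mem_filter, Fintype.mem_piFinset, mem_Icc] at hl
    refine ⟨fun j => ⟨l j, Nat.lt_succ_of_le (hl.1 j).2⟩, ?_, rfl⟩
    simpa using ⟨fun j => (hl.1 j).1, hl.2⟩

theorem stmt4_general (n i : ℕ) :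
    ∑ f ∈ Finset.univ.filter
        (fun f : Fin i → Fin (n + 1) => (∀ j, 1 ≤ (f j : ℕ)) ∧ ∑ j, (f j : ℕ) ≤ n),
      n.factorial / ((∏ j, ((f j : ℕ)).factorial) * (n - ∑ j, (f j : ℕ)).factorial)
      = i.factorial * stirlingSecond (n + 1) (i + 1) := by
  rw [sum_finTuples_eq_multinomialSum, multinomialSum_eq]

theorem stmt4 (n i : ℕ) (h1 : 1 ≤ i) (h2 : i ≤ n) :
    ∑ f ∈ Finset.univ.filter
        (fun f : Fin i → Fin (n + 1) => (∀ j, 1 ≤ (f j : ℕ)) ∧ ∑ j, (f j : ℕ) ≤ n),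
      n.factorial / ((∏ j, ((f j : ℕ)).factorial) * (n - ∑ j, (f j : ℕ)).factorial)
      = i.factorial * stirlingSecond (n + 1) (i + 1) :=
  stmt4_general n i
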